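/- arXiv:1710.04873 — 4 statements merged into one kernel-verified Lean document; each statement's English description precedes it below -/
import Mathlib

section
/- With the notation below, if m ≥ 2 then ‖H‖² ≥ 2τ/(m(m−1)). (This is the mean curvature estimate of the paper's Theorem 3.4 in the C-totally real case, where the characteristic vector field is normal so that the term (α²−ρ)/m is absent.) -/
open scoped BigOperators RealInnerProductSpace

/-- Mean curvature estimate `‖H‖² ≥ 2τ/(m(m-1))` for a `C`-totally real
submanifold of an `(LCS)ₙ`-manifold (Theorem 3.4 of the paper in the
`C`-totally real case, where the term `(α²-ρ)/m` is absent). -/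
theorem c_totally_real_mean_curvature_estimate
    {V W : Type*} [NormedAddCommGroup V] [InnerProductSpace ℝ V]
    [NormedAddCommGroup W] [InnerProductSpace ℝ W]
    {m : ℕ} (hm : 2 ≤ m)
    (e : OrthonormalBasis (Fin m) ℝ V)
    (h : V →ₗ[ℝ] V →ₗ[ℝ] W)
    (hsymm : ∀ X Y : V, h X Y = h Y X)
    (H : W) (hH : H = (m : ℝ)⁻¹ • ∑ i, h (e i) (e i))
    (τ : ℝ)
    (hτ : τ = ∑ i : Fin m, ∑ j ∈ Finset.Ioi i,
        (⟪h (e i) (e i), h (e j) (e j)⟫ - ‖h (e i) (e j)‖ ^ 2)) :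
    ‖H‖ ^ 2 ≥ 2 * τ / ((m : ℝ) * ((m : ℝ) - 1)) := by
  set a : Fin m → W := fun i => h (e i) (e i) with ha
  set S : W := ∑ i, a i with hS
  set g : Fin m → Fin m → ℝ := fun i j => ⟪a i, a j⟫ with hg
  have hgsymm : ∀ i j, g i j = g j i := fun i j => real_inner_comm _ _
  -- N = ‖S‖²
  have hN : ‖S‖ ^ 2 = ∑ i, ∑ j, g i j := by
    rw [← real_inner_self_eq_norm_sq, hS, sum_inner]
    exact Finset.sum_congr rfl fun i _ => by rw [inner_sum]
  -- decomposition of the double sum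
  have hoff : ∑ i, ∑ j ∈ Finset.Ioi i, (g j i + g i j)
      = ∑ i, ∑ j ∈ ({i}ᶜ : Finset (Fin m)), g j i := by
    have := Finset.sum_sum_Ioi_add_eq_sum_sum_off_diag g
    convert this using 2
  have hdecomp : ∑ i, ∑ j, g i j
      = ∑ i, g i i + 2 * ∑ i, ∑ j ∈ Finset.Ioi i, g i j := by
    have h1 : ∀ i : Fin m, ∑ j, g j i
        = g i i + ∑ j ∈ ({i}ᶜ : Finset (Fin m)), g j i := by
      intro i
      rw [← Finset.sum_compl_add_sum ({i} : Finset (Fin m)) (fun j => g j i),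
        Finset.sum_singleton, add_comm]
    have h2 : ∑ i, ∑ j, g i j = ∑ i, ∑ j, g j i := by
      exact Finset.sum_congr rfl fun i _ =>
        Finset.sum_congr rfl fun j _ => hgsymm i j
    calc ∑ i, ∑ j, g i j = ∑ i, (g i i + ∑ j ∈ ({i}ᶜ : Finset (Fin m)), g j i) := by
          rw [h2]; exact Finset.sum_congr rfl fun i _ => h1 i
      _ = ∑ i, g i i + ∑ i, ∑ j ∈ ({i}ᶜ : Finset (Fin m)), g j i := by
          rw [Finset.sum_add_distrib]
      _ = ∑ i, g i i + 2 * ∑ i, ∑ j ∈ Finset.Ioi i, g i j := by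
          rw [← hoff]
          congr 1
          rw [Finset.mul_sum]
          refine Finset.sum_congr rfl fun i _ => ?_
          rw [Finset.mul_sum]
          refine Finset.sum_congr rfl fun j _ => ?_
          rw [hgsymm i j]; ring
  -- Cauchy–Schwarz: ‖S‖² ≤ m * ∑ ‖a i‖²
  have hdiag : ∑ i, g i i = ∑ i, ‖a i‖ ^ 2 :=
    Finset.sum_congr rfl fun i _ => real_inner_self_eq_norm_sq _
  have hCS : ‖S‖ ^ 2 ≤ (m : ℝ) * ∑ i, g i i := by
    rw [hdiag]
    calc ‖S‖ ^ 2 ≤ (∑ i, ‖a i‖) ^ 2 := by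
          have := norm_sum_le Finset.univ a
          have h0 : (0:ℝ) ≤ ‖S‖ := norm_nonneg _
          nlinarith [this]
      _ ≤ (Finset.univ : Finset (Fin m)).card * ∑ i, ‖a i‖ ^ 2 :=
          sq_sum_le_card_mul_sum_sq
      _ = (m : ℝ) * ∑ i, ‖a i‖ ^ 2 := by simp
  -- τ bound
  have hτle : 2 * τ ≤ ∑ i, ∑ j, g i j - ∑ i, g i i := by
    rw [hdecomp]
    have : τ ≤ ∑ i, ∑ j ∈ Finset.Ioi i, g i j := by
      rw [hτ]
      refine Finset.sum_le_sum fun i _ => Finset.sum_le_sum fun j _ => ?_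
      have : (0:ℝ) ≤ ‖h (e i) (e j)‖ ^ 2 := sq_nonneg _
      simp only [hg, ha]; linarith
    linarith
  -- ‖H‖² = ‖S‖²/m²
  have hm1 : (1:ℝ) ≤ (m : ℝ) := by exact_mod_cast Nat.one_le_of_lt hm
  have hm2 : (2:ℝ) ≤ (m : ℝ) := by exact_mod_cast hm
  have hmpos : (0:ℝ) < (m : ℝ) := by linarith
  have hHnorm : ‖H‖ ^ 2 = ‖S‖ ^ 2 / (m : ℝ) ^ 2 := by
    rw [hH, norm_smul, mul_pow]
    rw [norm_inv, Real.norm_natCast]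
    field_simp
  -- combine
  have key : 2 * τ * (m : ℝ) ≤ ‖S‖ ^ 2 * ((m : ℝ) - 1) := by
    have hD : ‖S‖ ^ 2 / (m : ℝ) ≤ ∑ i, g i i := by
      rw [div_le_iff₀ hmpos]
      linarith [hCS]
    have h2τ : 2 * τ ≤ ‖S‖ ^ 2 - ‖S‖ ^ 2 / (m : ℝ) := by
      rw [← hN] at hτle
      linarith
    have := mul_le_mul_of_nonneg_right h2τ (le_of_lt hmpos)
    calc 2 * τ * (m : ℝ) ≤ (‖S‖ ^ 2 - ‖S‖ ^ 2 / (m : ℝ)) * (m : ℝ) := this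
      _ = ‖S‖ ^ 2 * ((m : ℝ) - 1) := by field_simp
  rw [ge_iff_le, hHnorm, div_le_div_iff₀ (by nlinarith) (by positivity)]
  nlinarith [key]
end

section
/- With the notation below, let c ∈ ℝ and let τ' ∈ ℝ satisfy the Gauss identity 2τ' = m²‖H‖² − ‖h‖² − (m−1)c (this is the identity of the paper's Theorem 3.1 for an m-dimensional totally real submanifold of an (LCS)_n-manifold, with c = α²−ρ and τ' its scalar curvature). If m ≥ 2, then ‖H‖² ≥ 2τ'/(m(m−1)) + c/m. (Theorem 3.4 of the paper.) -/
open scoped BigOperators RealInnerProductSpace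

/-- Theorem 3.4 of the paper: if the Gauss identity
`2τ' = m²‖H‖² - ‖h‖² - (m-1)c` holds (with `c = α² - ρ`), then
`‖H‖² ≥ 2τ'/(m(m-1)) + c/m` for a totally real submanifold of an
`(LCS)ₙ`-manifold. -/
theorem totally_real_mean_curvature_estimate
    {V W : Type*} [NormedAddCommGroup V] [InnerProductSpace ℝ V]
    [NormedAddCommGroup W] [InnerProductSpace ℝ W]
    {m : ℕ} (hm : 2 ≤ m)
    (e : OrthonormalBasis (Fin m) ℝ V)
    (h : V →ₗ[ℝ] V →ₗ[ℝ] W)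
    (hsymm : ∀ X Y : V, h X Y = h Y X)
    (H : W) (hH : H = (m : ℝ)⁻¹ • ∑ i, h (e i) (e i))
    (normh2 : ℝ)
    (hnormh2 : normh2 = ∑ i : Fin m, ∑ j : Fin m, ‖h (e i) (e j)‖ ^ 2)
    (c τ' : ℝ)
    (hGauss : 2 * τ' = (m : ℝ) ^ 2 * ‖H‖ ^ 2 - normh2 - ((m : ℝ) - 1) * c) :
    ‖H‖ ^ 2 ≥ 2 * τ' / ((m : ℝ) * ((m : ℝ) - 1)) + c / (m : ℝ) := by
  have hM : (2 : ℝ) ≤ (m : ℝ) := by exact_mod_cast hm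
  have hM0 : (0 : ℝ) < (m : ℝ) := by linarith
  -- the sum S
  set S := ∑ i, h (e i) (e i) with hS
  have h1 : ‖S‖ ≤ ∑ i, ‖h (e i) (e i)‖ := norm_sum_le _ _
  have h2 : (∑ i, ‖h (e i) (e i)‖) ^ 2 ≤ (m : ℝ) * ∑ i, ‖h (e i) (e i)‖ ^ 2 := by
    have := sq_sum_le_card_mul_sum_sq (s := Finset.univ)
      (f := fun i : Fin m => ‖h (e i) (e i)‖)
    simpa using this
  have h3 : (∑ i, ‖h (e i) (e i)‖ ^ 2) ≤ normh2 := by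
    rw [hnormh2]
    apply Finset.sum_le_sum
    intro i _
    exact Finset.single_le_sum (f := fun j => ‖h (e i) (e j)‖ ^ 2)
      (fun j _ => by positivity) (Finset.mem_univ i)
  have hSsq : ‖S‖ ^ 2 ≤ (m : ℝ) * normh2 := by
    calc ‖S‖ ^ 2 ≤ (∑ i, ‖h (e i) (e i)‖) ^ 2 := by
          apply pow_le_pow_left₀ (norm_nonneg _) h1
      _ ≤ (m : ℝ) * ∑ i, ‖h (e i) (e i)‖ ^ 2 := h2
      _ ≤ (m : ℝ) * normh2 := by nlinarith
  have hHnorm : ‖H‖ ^ 2 = ((m : ℝ)⁻¹) ^ 2 * ‖S‖ ^ 2 := by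
    rw [hH, norm_smul]
    simp [mul_pow, abs_of_pos (inv_pos.mpr hM0)]
  have key : (m : ℝ) ^ 2 * ‖H‖ ^ 2 ≤ (m : ℝ) * normh2 := by
    rw [hHnorm]
    have : (m : ℝ) ^ 2 * (((m : ℝ)⁻¹) ^ 2 * ‖S‖ ^ 2) = ‖S‖ ^ 2 := by
      field_simp
    rw [this]; exact hSsq
  rw [ge_iff_le, div_add_div _ _ (by nlinarith) (by positivity),
    div_le_iff₀ (by nlinarith)]
  nlinarith [key, hGauss, sq_nonneg (‖H‖)]
end

section
/- With the notation below, the equality 4·Ric(X) = m²‖H‖² holds for every unit vector X ∈ V if and only if either h = 0 identically (the point is totally geodesic), or m = 2 and h(X,Y) = ⟨X,Y⟩·H for all X,Y ∈ V (the point is totally umbilical). (This is part (iii) of the paper's Theorem 3.3 in the C-totally real case.) -/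
open scoped BigOperators RealInnerProductSpace

private lemma sum_inner_sq_eq {V : Type*} [NormedAddCommGroup V] [InnerProductSpace ℝ V]
    {m : ℕ} (e : OrthonormalBasis (Fin m) ℝ V) (X : V) :
    ∑ j : Fin m, ⟪e j, X⟫ ^ 2 = ‖X‖ ^ 2 := by
  have h := e.sum_inner_mul_inner X X
  rw [real_inner_self_eq_norm_sq] at h
  calc ∑ j : Fin m, ⟪e j, X⟫ ^ 2 = ∑ j : Fin m, ⟪X, e j⟫ * ⟪e j, X⟫ := by
        refine Finset.sum_congr rfl fun j _ => ?_
        rw [real_inner_comm X (e j)]; ring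
    _ = ‖X‖ ^ 2 := h

/-- Theorem 3.3 (iii) of the paper in the `C`-totally real case: the equality
`4 Ric(X) = m²‖H‖²` holds for every unit vector `X` if and only if either the
point is totally geodesic (`h = 0`), or `m = 2` and the point is totally
umbilical (`h(X,Y) = ⟪X,Y⟫ • H`). -/
theorem c_totally_real_ricci_equality_all
    {V W : Type*} [NormedAddCommGroup V] [InnerProductSpace ℝ V]
    [NormedAddCommGroup W] [InnerProductSpace ℝ W]
    {m : ℕ} (hm : 0 < m)
    (e : OrthonormalBasis (Fin m) ℝ V)
    (h : V →ₗ[ℝ] V →ₗ[ℝ] W)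
    (hsymm : ∀ X Y : V, h X Y = h Y X)
    (H : W) (hH : H = (m : ℝ)⁻¹ • ∑ i, h (e i) (e i))
    (Ric : V → ℝ)
    (hRic : ∀ X : V,
      Ric X = (m : ℝ) * ⟪h X X, H⟫ - ∑ j : Fin m, ‖h X (e j)‖ ^ 2) :
    (∀ X : V, ‖X‖ = 1 → 4 * Ric X = (m : ℝ) ^ 2 * ‖H‖ ^ 2) ↔
      ((∀ X Y : V, h X Y = 0) ∨
        (m = 2 ∧ ∀ X Y : V, h X Y = ⟪X, Y⟫ • H)) := by
  have hm0 : (m : ℝ) ≠ 0 := Nat.cast_ne_zero.mpr hm.ne'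
  constructor
  · intro heq
    -- Step 0: Cauchy–Schwarz type bound for unit vectors
    have hCS : ∀ X : V, ‖X‖ = 1 → ‖h X X‖ ^ 2 ≤ ∑ j : Fin m, ‖h X (e j)‖ ^ 2 := by
      intro X hX
      set w := h X X with hw
      have hXrepr : ∑ j : Fin m, ⟪e j, X⟫ • e j = X := e.sum_repr' X
      have hwsum : ∑ j : Fin m, ⟪e j, X⟫ • h X (e j) = w := by
        have h1 : h X (∑ j : Fin m, ⟪e j, X⟫ • e j) = w := by rw [hXrepr]
        rw [← h1, map_sum]
        exact Finset.sum_congr rfl fun j _ => (map_smul _ _ _).symm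
      have hnn : (0:ℝ) ≤ ∑ j : Fin m, ‖h X (e j) - ⟪e j, X⟫ • w‖ ^ 2 :=
        Finset.sum_nonneg fun j _ => sq_nonneg _
      have hexp : ∑ j : Fin m, ‖h X (e j) - ⟪e j, X⟫ • w‖ ^ 2
          = (∑ j : Fin m, ‖h X (e j)‖ ^ 2) - ‖w‖ ^ 2 := by
        have hterm : ∀ j : Fin m, ‖h X (e j) - ⟪e j, X⟫ • w‖ ^ 2
            = ‖h X (e j)‖ ^ 2 - 2 * (⟪e j, X⟫ * ⟪h X (e j), w⟫) + ⟪e j, X⟫ ^ 2 * ‖w‖ ^ 2 := by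
          intro j
          rw [norm_sub_sq_real, inner_smul_right, norm_smul]
          rw [mul_pow, Real.norm_eq_abs, sq_abs]
        rw [Finset.sum_congr rfl fun j _ => hterm j]
        rw [Finset.sum_add_distrib, Finset.sum_sub_distrib, ← Finset.sum_mul,
          sum_inner_sq_eq e X, hX, ← Finset.mul_sum]
        have hs : ∑ j : Fin m, ⟪e j, X⟫ * ⟪h X (e j), w⟫ = ‖w‖ ^ 2 := by
          have h2 : ⟪∑ j : Fin m, ⟪e j, X⟫ • h X (e j), w⟫ = ‖w‖ ^ 2 := by
            rw [hwsum, real_inner_self_eq_norm_sq]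
          rw [← h2, sum_inner]
          exact Finset.sum_congr rfl fun j _ => by rw [real_inner_smul_left]
        rw [hs]; ring
      linarith [hexp ▸ hnn]
    -- Step 1: for unit X, m • H = 2 • h X X
    have key : ∀ X : V, ‖X‖ = 1 → (m : ℝ) • H = (2 : ℝ) • h X X := by
      intro X hX
      have hE := heq X hX
      rw [hRic X] at hE
      have hexp : ‖(m : ℝ) • H - (2 : ℝ) • h X X‖ ^ 2
          = (m:ℝ)^2 * ‖H‖^2 - 4 * ((m:ℝ) * ⟪h X X, H⟫) + 4 * ‖h X X‖^2 := by
        rw [norm_sub_sq_real, real_inner_smul_left, real_inner_smul_right,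
          norm_smul, norm_smul]
        rw [mul_pow, mul_pow, Real.norm_eq_abs, Real.norm_eq_abs, sq_abs, sq_abs]
        rw [real_inner_comm H (h X X)]
        ring
      have hle : ‖(m : ℝ) • H - (2 : ℝ) • h X X‖ ^ 2 ≤ 0 := by
        rw [hexp]
        nlinarith [hCS X hX, hE]
      have hz : (m : ℝ) • H - (2 : ℝ) • h X X = 0 := by
        have h1 := sq_nonneg ‖(m : ℝ) • H - (2 : ℝ) • h X X‖
        have h2 : ‖(m : ℝ) • H - (2 : ℝ) • h X X‖ ^ 2 = 0 := le_antisymm hle h1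
        exact norm_eq_zero.mp (pow_eq_zero_iff (two_ne_zero) |>.mp h2)
      exact sub_eq_zero.mp hz
    -- Step 2a: h X X = ((m/2) * ‖X‖²) • H for all X
    have hdiag : ∀ X : V, h X X = ((m : ℝ) / 2 * ‖X‖ ^ 2) • H := by
      intro X
      rcases eq_or_ne X 0 with rfl | hX0
      · simp
      · have hnX : ‖X‖ ≠ 0 := norm_ne_zero_iff.mpr hX0
        set u : V := ‖X‖⁻¹ • X with hu
        have hu1 : ‖u‖ = 1 := by
          rw [hu, norm_smul, norm_inv, norm_norm, inv_mul_cancel₀ hnX]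
        have hk := key u hu1
        have huu : h u u = (‖X‖⁻¹ * ‖X‖⁻¹) • h X X := by
          rw [hu, map_smul, map_smul, LinearMap.smul_apply, smul_smul]
        rw [huu, smul_smul] at hk
        have : h X X = ((2 : ℝ) * (‖X‖⁻¹ * ‖X‖⁻¹))⁻¹ • ((m : ℝ) • H) := by
          rw [hk, smul_smul, inv_mul_cancel₀ (by positivity), one_smul]
        rw [this, smul_smul]
        congr 1
        field_simp
    -- Step 2b: polarization gives umbilicity with factor m/2
    have humb : ∀ X Y : V, h X Y = ((m : ℝ) / 2 * ⟪X, Y⟫) • H := by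
      intro X Y
      have hadd : h (X + Y) (X + Y) = h X X + h X Y + h X Y + h Y Y := by
        simp only [map_add, LinearMap.add_apply]
        rw [hsymm Y X]
        abel
      have h1 := hdiag (X + Y)
      rw [hadd, hdiag X, hdiag Y, norm_add_sq_real] at h1
      have h2 : (2 : ℝ) • h X Y = ((m : ℝ) / 2 * (2 * ⟪X, Y⟫)) • H := by
        have := h1
        have hXY : h X Y + h X Y
            = ((m:ℝ)/2 * (‖X‖^2 + 2*⟪X,Y⟫ + ‖Y‖^2)) • H
              - ((m:ℝ)/2 * ‖X‖^2) • H - ((m:ℝ)/2 * ‖Y‖^2) • H := by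
          rw [← this]; abel
        rw [two_smul, hXY, ← sub_smul, ← sub_smul]
        congr 1
        ring
      have : h X Y = (2 : ℝ)⁻¹ • ((2 : ℝ) • h X Y) := by
        rw [smul_smul]; norm_num
      rw [this, h2, smul_smul]
      congr 1
      ring
    -- Step 3: H = (m/2) • H
    have hHeq : H = ((m : ℝ) / 2) • H := by
      conv_lhs => rw [hH]
      rw [Finset.sum_congr rfl fun i _ => humb (e i) (e i)]
      have hei : ∀ i : Fin m, ⟪e i, e i⟫ = (1 : ℝ) := fun i => by
        rw [real_inner_self_eq_norm_sq, e.orthonormal.1 i, one_pow]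
      rw [Finset.sum_congr rfl fun i _ => by rw [hei i, mul_one]]
      rw [Finset.sum_const, Finset.card_univ, Fintype.card_fin,
        ← Nat.cast_smul_eq_nsmul ℝ, smul_smul, smul_smul]
      congr 1
      field_simp
    have hcases : ((m : ℝ) / 2 - 1) • H = 0 := by
      rw [sub_smul, one_smul, ← hHeq, sub_self]
    rcases smul_eq_zero.mp hcases with hc | hc
    · -- m = 2
      have hm2 : (m : ℝ) = 2 := by linarith
      have hm2' : m = 2 := by exact_mod_cast hm2
      right
      refine ⟨hm2', fun X Y => ?_⟩
      rw [humb X Y, hm2]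
      norm_num
    · -- H = 0, so h = 0
      left
      intro X Y
      rw [humb X Y, hc, smul_zero]
  · rintro (h0 | ⟨hm2, humb⟩) X hX
    · have hH0 : H = 0 := by
        rw [hH, Finset.sum_congr rfl fun i _ => h0 (e i) (e i), Finset.sum_const, smul_zero,
          smul_zero]
      rw [hRic X, h0 X X, hH0]
      simp [h0]
    · subst hm2
      have hXX : h X X = H := by
        rw [humb X X, real_inner_self_eq_norm_sq, hX]
        norm_num
      have hsum : ∑ j : Fin 2, ‖h X (e j)‖ ^ 2 = ‖H‖ ^ 2 := by
        rw [Finset.sum_congr rfl fun j _ => by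
          rw [humb X (e j), norm_smul, mul_pow, Real.norm_eq_abs, sq_abs]]
        rw [← Finset.sum_mul]
        have h1 : ∑ j : Fin 2, ⟪X, e j⟫ ^ 2 = 1 := by
          have h2 : ∑ j : Fin 2, ⟪e j, X⟫ ^ 2 = 1 := by rw [sum_inner_sq_eq e X, hX, one_pow]
          rw [← h2]
          exact Finset.sum_congr rfl fun j _ => by rw [real_inner_comm]
        rw [h1, one_mul]
      rw [hRic X, hXX, hsum, real_inner_self_eq_norm_sq]
      norm_num
      ring
end

section
/- With the notation below, for every integer k with 2 ≤ k ≤ m (m ≥ 2) one has ‖H‖² ≥ Θ_k. (This is the paper's Theorem 3.5 in the C-totally real case, where the term (α²−ρ)/m is absent.) -/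
open scoped BigOperators RealInnerProductSpace
open Finset

lemma exists_subset_sum_le {ι : Type*} [DecidableEq ι] (s : Finset ι) (v : ι → ℝ) (a : ℝ) :
    ∀ r : ℕ, r ≤ s.card → (∑ j ∈ s, v j) ≤ s.card * a →
      ∃ T ⊆ s, T.card = r ∧ (∑ j ∈ T, v j) ≤ r * a := by
  intro r
  induction r with
  | zero => intro _ _; exact ⟨∅, empty_subset s, rfl, by simp⟩
  | succ r ih =>
    intro hr htot
    obtain ⟨T, hTs, hTcard, hTsum⟩ := ih (by omega) htot
    have hsd : (s \ T).card = s.card - r := by rw [card_sdiff_of_subset hTs, hTcard]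
    have hrn : r < s.card := by omega
    have hpos : 0 < (s \ T).card := by omega
    have hne : (s \ T).Nonempty := card_pos.mp hpos
    have hsplit : (∑ j ∈ T, v j) + (∑ j ∈ s \ T, v j) = ∑ j ∈ s, v j := by
      rw [add_comm]; exact Finset.sum_sdiff hTs
    obtain ⟨x, hxsd, hx⟩ : ∃ x ∈ s \ T, v x ≤ (∑ j ∈ s \ T, v j) / (s \ T).card := by
      apply exists_le_of_sum_le hne
      rw [Finset.sum_const, nsmul_eq_mul, mul_div_cancel₀]
      positivity
    have hxs : x ∈ s := (mem_sdiff.mp hxsd).1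
    have hxT : x ∉ T := (mem_sdiff.mp hxsd).2
    refine ⟨insert x T, insert_subset hxs hTs, by rw [card_insert_of_notMem hxT, hTcard], ?_⟩
    rw [Finset.sum_insert hxT]
    have hcard : ((s \ T).card : ℝ) = (s.card : ℝ) - r := by
      rw [hsd, Nat.cast_sub (by omega)]
    have h1 : ((s.card : ℝ) - r) * v x ≤ (s.card : ℝ) * a - (∑ j ∈ T, v j) := by
      have hc : (0:ℝ) < ((s \ T).card : ℝ) := by positivity
      have h2 : v x * ((s \ T).card : ℝ) ≤ ∑ j ∈ s \ T, v j := (le_div_iff₀ hc).mp hx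
      rw [hcard] at h2
      have h3 : (∑ j ∈ s \ T, v j) = (∑ j ∈ s, v j) - ∑ j ∈ T, v j := by linarith
      rw [h3] at h2
      nlinarith
    have hco : (0:ℝ) ≤ (s.card : ℝ) - r - 1 := by
      have : (r:ℝ) + 1 ≤ s.card := by exact_mod_cast hrn
      linarith
    push_cast
    nlinarith [mul_le_mul_of_nonneg_left hTsum hco]

/-- Theorem 3.5 of the paper in the `C`-totally real case: `‖H‖² ≥ Θₖ` for each
integer `2 ≤ k ≤ m`, where `H` is the mean curvature vector and
`Θₖ = (1/(k-1))·inf_{L,X} Ric_L(X)` is the `k`-Ricci invariant, the infimum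
being taken over all `k`-plane sections `L` (encoded by orthonormal `k`-frames
`f` with `f 0 = X` a unit vector of `L`), the curvatures being computed from
the second fundamental form `h` via the Gauss equation. -/
theorem c_totally_real_mean_curvature_ge_theta
    {V W : Type*} [NormedAddCommGroup V] [InnerProductSpace ℝ V]
    [NormedAddCommGroup W] [InnerProductSpace ℝ W]
    {m : ℕ} (hm : 2 ≤ m)
    (e : OrthonormalBasis (Fin m) ℝ V)
    (h : V →ₗ[ℝ] V →ₗ[ℝ] W)
    (hsymm : ∀ X Y : V, h X Y = h Y X)
    (H : W) (hH : H = (m : ℝ)⁻¹ • ∑ i, h (e i) (e i))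
    (K : V → V → ℝ)
    (hK : ∀ X Y : V, K X Y = ⟪h X X, h Y Y⟫ - ‖h X Y‖ ^ 2)
    (k : ℕ) (hk : 2 ≤ k) (hkm : k ≤ m)
    (Θ : ℝ)
    (hΘ : Θ = ((k : ℝ) - 1)⁻¹ *
      sInf {r : ℝ | ∃ f : Fin k → V, Orthonormal ℝ f ∧
        r = ∑ j ∈ Finset.univ.erase (⟨0, by omega⟩ : Fin k), K (f ⟨0, by omega⟩) (f j)}) :
    ‖H‖ ^ 2 ≥ Θ := by
  set Sset : Set ℝ := {r : ℝ | ∃ f : Fin k → V, Orthonormal ℝ f ∧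
        r = ∑ j ∈ Finset.univ.erase (⟨0, by omega⟩ : Fin k), K (f ⟨0, by omega⟩) (f j)} with hSset
  have hk1 : (0:ℝ) < (k : ℝ) - 1 := by
    have : (2:ℝ) ≤ (k:ℝ) := by exact_mod_cast hk
    linarith
  by_cases hbdd : BddBelow Sset
  swap
  · rw [hΘ, Real.sInf_of_not_bddBelow hbdd, mul_zero]
    positivity
  -- the interesting case
  set a : Fin m → W := fun i => h (e i) (e i) with ha
  set S : W := ∑ i, a i with hSdef
  set Q : ℝ := ∑ i, ‖a i‖ ^ 2 with hQdef
  set c : Fin m → Fin m → ℝ := fun i j => K (e i) (e j) with hc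
  have hm0 : (0:ℝ) < (m:ℝ) := by positivity
  have hHnorm : (m:ℝ) * ‖H‖ = ‖S‖ := by
    rw [hH, norm_smul, Real.norm_eq_abs, abs_inv, abs_of_nonneg (by positivity)]
    field_simp
  have hnormS : ‖S‖ ^ 2 = (m:ℝ) ^ 2 * ‖H‖ ^ 2 := by rw [← hHnorm]; ring
  have hQ : (m:ℝ) * ‖H‖ ^ 2 ≤ Q := by
    have h1 : ‖S‖ ≤ ∑ i, ‖a i‖ := norm_sum_le _ _
    have h2 : (∑ i, ‖a i‖) ^ 2 ≤ (m:ℝ) * Q := by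
      have := sq_sum_le_card_mul_sum_sq (s := (univ : Finset (Fin m))) (f := fun i => ‖a i‖)
      simpa [card_univ] using this
    have h3 : ‖S‖ ^ 2 ≤ (∑ i, ‖a i‖) ^ 2 := by
      apply pow_le_pow_left₀ (norm_nonneg _) h1
    nlinarith
  have key1 : ∀ i : Fin m, ∑ j ∈ univ.erase i, ⟪a i, a j⟫ = ⟪a i, S⟫ - ‖a i‖ ^ 2 := by
    intro i
    rw [Finset.sum_erase_eq_sub (mem_univ i), ← inner_sum, real_inner_self_eq_norm_sq]
  have key2 : ∑ i, (⟪a i, S⟫ - ‖a i‖ ^ 2) = ‖S‖ ^ 2 - Q := by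
    rw [Finset.sum_sub_distrib, ← sum_inner, real_inner_self_eq_norm_sq]
  have htot : ∑ i, ∑ j ∈ univ.erase i, c i j ≤ (m:ℝ) * (((m:ℝ) - 1) * ‖H‖ ^ 2) := by
    calc ∑ i, ∑ j ∈ univ.erase i, c i j
        ≤ ∑ i, ∑ j ∈ univ.erase i, ⟪a i, a j⟫ := by
          apply Finset.sum_le_sum; intro i _
          apply Finset.sum_le_sum; intro j _
          simp only [hc, hK]
          have := sq_nonneg ‖h (e i) (e j)‖
          linarith
      _ = ∑ i, (⟪a i, S⟫ - ‖a i‖ ^ 2) := by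
          exact Finset.sum_congr rfl fun i _ => key1 i
      _ = ‖S‖ ^ 2 - Q := key2
      _ = (m:ℝ) ^ 2 * ‖H‖ ^ 2 - Q := by rw [hnormS]
      _ ≤ (m:ℝ) * (((m:ℝ) - 1) * ‖H‖ ^ 2) := by nlinarith
  obtain ⟨i, -, hi⟩ : ∃ i ∈ (univ : Finset (Fin m)),
      ∑ j ∈ univ.erase i, c i j ≤ ((m:ℝ) - 1) * ‖H‖ ^ 2 := by
    haveI : Nonempty (Fin m) := ⟨⟨0, by omega⟩⟩
    apply exists_le_of_sum_le univ_nonempty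
    rw [Finset.sum_const, nsmul_eq_mul, card_univ, Fintype.card_fin]
    exact htot
  -- select k-1 indices with small curvature sum
  obtain ⟨T, hTsub, hTcard, hTsum⟩ :
      ∃ T ⊆ univ.erase i, T.card = k - 1 ∧ (∑ j ∈ T, c i j) ≤ ((k:ℝ) - 1) * ‖H‖ ^ 2 := by
    have hcardE : (univ.erase i).card = m - 1 := by
      rw [card_erase_of_mem (mem_univ i), card_univ, Fintype.card_fin]
    obtain ⟨T, h1, h2, h3⟩ := exists_subset_sum_le (univ.erase i) (c i) (‖H‖ ^ 2) (k - 1)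
      (by omega)
      (by
        rw [hcardE]
        have : ((m - 1 : ℕ) : ℝ) = (m:ℝ) - 1 := by
          rw [Nat.cast_sub (by omega)]; norm_num
        rw [this]
        exact hi)
    refine ⟨T, h1, h2, ?_⟩
    have : ((k - 1 : ℕ) : ℝ) = (k:ℝ) - 1 := by
      rw [Nat.cast_sub (by omega)]; norm_num
    rwa [this] at h3
  -- build the orthonormal frame indexed by Fin k
  have hiT : i ∉ T := fun hiT => (Finset.mem_erase.mp (hTsub hiT)).1 rfl
  set o := T.orderIsoOfFin hTcard with ho
  set ι : Fin k → Fin m := fun j =>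
    if hj : j.val = 0 then i else (o ⟨j.val - 1, by omega⟩ : Fin m) with hι
  have hιT : ∀ j : Fin k, j.val ≠ 0 → ι j ∈ T := by
    intro j hj
    simp only [hι, dif_neg hj]
    exact (o _).2
  have hinj : Function.Injective ι := by
    intro x y hxy
    by_cases hx : x.val = 0 <;> by_cases hy : y.val = 0
    · exact Fin.ext (by omega)
    · exfalso
      rw [hι] at hxy
      simp only [dif_pos hx, dif_neg hy] at hxy
      exact hiT (hxy ▸ (o _).2)
    · exfalso
      rw [hι] at hxy
      simp only [dif_neg hx, dif_pos hy] at hxy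
      exact hiT (hxy ▸ (o _).2)
    · rw [hι] at hxy
      simp only [dif_neg hx, dif_neg hy] at hxy
      have h2 : (⟨x.val - 1, by omega⟩ : Fin (k-1)) = ⟨y.val - 1, by omega⟩ :=
        o.injective (Subtype.ext hxy)
      have := Fin.mk.injEq (n := k - 1) (x.val - 1) (by omega) (y.val - 1) (by omega)
      rw [this] at h2
      exact Fin.ext (by omega)
  set f : Fin k → V := fun j => e (ι j) with hf
  have horth : Orthonormal ℝ f := e.orthonormal.comp ι hinj
  have hf0 : f (⟨0, by omega⟩ : Fin k) = e i := by
    simp only [hf, hι, dif_pos]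
  -- the sum over the frame equals the sum over T
  have himg : (univ.erase (⟨0, by omega⟩ : Fin k)).image ι = T := by
    ext t
    constructor
    · intro ht
      obtain ⟨j, hj, rfl⟩ := Finset.mem_image.mp ht
      have hj0 : j.val ≠ 0 := by
        intro h0
        exact (Finset.mem_erase.mp hj).1 (by apply Fin.ext; simpa using h0)
      exact hιT j hj0
    · intro ht
      refine Finset.mem_image.mpr ⟨⟨(o.symm ⟨t, ht⟩).val + 1,
        by have := (o.symm ⟨t, ht⟩).isLt; omega⟩, ?_, ?_⟩
      · refine Finset.mem_erase.mpr ⟨?_, mem_univ _⟩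
        intro h0
        have := Fin.mk.injEq (n := k) ((o.symm ⟨t, ht⟩).val + 1) (by omega) 0 (by omega)
        rw [this] at h0
        omega
      · simp only [hι]
        rw [dif_neg (by simp)]
        have h1 : (⟨(o.symm ⟨t, ht⟩).val + 1 - 1, by omega⟩ : Fin (k-1)) = o.symm ⟨t, ht⟩ := by
          apply Fin.ext; simp
        rw [h1, OrderIso.apply_symm_apply]
  have hsum : (∑ j ∈ Finset.univ.erase (⟨0, by omega⟩ : Fin k),
      K (f (⟨0, by omega⟩ : Fin k)) (f j)) = ∑ t ∈ T, c i t := by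
    rw [← himg, Finset.sum_image (fun x _ y _ hxy => hinj hxy)]
    apply Finset.sum_congr rfl
    intro j _
    rw [hf0]
  have hmem : (∑ j ∈ Finset.univ.erase (⟨0, by omega⟩ : Fin k),
      K (f (⟨0, by omega⟩ : Fin k)) (f j)) ∈ Sset := ⟨f, horth, rfl⟩
  have hle : sInf Sset ≤ ((k:ℝ) - 1) * ‖H‖ ^ 2 := by
    refine le_trans (csInf_le hbdd hmem) ?_
    rw [hsum]
    exact hTsum
  rw [hΘ]
  calc ((k:ℝ) - 1)⁻¹ * sInf Sset ≤ ((k:ℝ) - 1)⁻¹ * (((k:ℝ) - 1) * ‖H‖ ^ 2) := by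
        exact mul_le_mul_of_nonneg_left hle (by positivity)
    _ = ‖H‖ ^ 2 := by field_simp
end
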